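/- Let B be a nonsingular (ℓ+1)×(ℓ+1) matrix over F_q[X] such that B·W_ℓ is in weak Popov form, and suppose deg R ≥ k. Form the (ℓ+2)×(ℓ+2) matrix C whose first row is (G^{s+1}, 0, …, 0) and whose (i+1)-th row is (0 | b_i) − R·(b_i | 0), where b_i is the i-th row of B. Then the orthogonality defect of C·W_{ℓ+1} equals (ℓ+1)(deg R − k + 1), which is at most (ℓ+1)(n−k). -/

import Mathlib

open Polynomial

open scoped Classical

/-- The degree of a vector over `F[X]`: the maximum of the degrees of its entries
(`⊥` for the zero vector). -/
noncomputable def vecDeg {F : Type*} [Field F] {m : ℕ} (v : Fin m → Polynomial F) : WithBot ℕ :=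
  Finset.univ.sup fun j => (v j).degree

/-- The leading position of a vector over `F[X]`: the largest index attaining the
vector's degree. -/
noncomputable def leadPos {F : Type*} [Field F] {m : ℕ} (v : Fin m → Polynomial F) : ℕ :=
  (Finset.univ.filter fun j : Fin m => (v j).degree = vecDeg v).sup fun j => (j : ℕ)

/-- A square matrix over `F[X]` is in weak Popov form if the leading positions of
its rows are pairwise distinct. -/
noncomputable def WeakPopov {F : Type*} [Field F] {m : ℕ}
    (V : Matrix (Fin m) (Fin m) (Polynomial F)) : Prop :=
  Function.Injective fun i => leadPos (V i)

/-- The degree of a matrix over `F[X]`: the sum of its row degrees (in `WithBot ℕ`). -/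
noncomputable def matDeg {F : Type*} [Field F] {m : ℕ}
    (V : Matrix (Fin m) (Fin m) (Polynomial F)) : WithBot ℕ :=
  ∑ i, vecDeg (V i)

/-- The degree of a vector over `F[X]`, as a natural number (via `natDegree`). -/
def vecDegNat {F : Type*} [Field F] {m : ℕ} (v : Fin m → Polynomial F) : ℕ :=
  Finset.univ.sup fun j => (v j).natDegree

/-- The degree of a matrix over `F[X]` as a natural number: the sum of its row degrees. -/
def matDegNat {F : Type*} [Field F] {m : ℕ}
    (V : Matrix (Fin m) (Fin m) (Polynomial F)) : ℕ :=
  ∑ i, vecDegNat (V i)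

/-- The diagonal weight matrix W_ℓ = diag(1, X^{k−1}, …, X^{ℓ(k−1)}). -/
noncomputable def Wmat (F : Type*) [Field F] (k ℓ : ℕ) :
    Matrix (Fin (ℓ + 1)) (Fin (ℓ + 1)) (Polynomial F) :=
  Matrix.diagonal fun i => X ^ ((i : ℕ) * (k - 1))

/-- The matrix C^II of micro-step type II: first row (G^{s+1}, 0, …, 0), and for each
row b_i of B the row (0 | b_i) − R·(b_i | 0). -/
noncomputable def stepIIMat {F : Type*} [Field F] (ℓ s : ℕ)
    (B : Matrix (Fin (ℓ + 1)) (Fin (ℓ + 1)) (Polynomial F)) (R G : Polynomial F) :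
    Matrix (Fin (ℓ + 2)) (Fin (ℓ + 2)) (Polynomial F) :=
  Matrix.of fun i j =>
    if hi : (i : ℕ) = 0 then
      if (j : ℕ) = 0 then G ^ (s + 1) else 0
    else
      (if hj : 1 ≤ (j : ℕ) then
          B ⟨(i : ℕ) - 1, by have := i.isLt; omega⟩ ⟨(j : ℕ) - 1, by have := j.isLt; omega⟩
        else 0)
      - R * (if hj : (j : ℕ) < ℓ + 1 then
          B ⟨(i : ℕ) - 1, by have := i.isLt; omega⟩ ⟨(j : ℕ), hj⟩ else 0)

/-!
Write `M = C · W_{ℓ+1}` and `d_i` for the row degrees of `B · W_ℓ`. The first row of `M` is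
`(G^{s+1}, 0, …, 0)`, and row `i + 1` is `X^{k-1} (0 | b_i W_ℓ) - R (b_i W_ℓ | 0)`, whose degree
is `deg R + d_i` because `k - 1 < deg R`. Expanding along the first row, `det C = G^{s+1} det B`,
the remaining minor being `B` times a unipotent triangular matrix; hence
`det M = G^{s+1} det (B W_ℓ) X^{(ℓ+1)(k-1)}`. Since `B W_ℓ` is in weak Popov form, its row-wise
leading coefficient matrix becomes triangular with nonzero diagonal once the rows are sorted by
leading position, so `deg det (B W_ℓ) = Σ d_i`. The two degrees thus differ by
`(ℓ + 1) (deg R - (k - 1))`.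
-/

section VecDeg

variable {F : Type*} [Field F] {m : ℕ}

theorem degree_le_vecDeg (v : Fin m → F[X]) (j : Fin m) : (v j).degree ≤ vecDeg v :=
  Finset.le_sup (f := fun j => (v j).degree) (Finset.mem_univ j)

theorem natDegree_le_vecDegNat (v : Fin m → F[X]) (j : Fin m) : (v j).natDegree ≤ vecDegNat v :=
  Finset.le_sup (f := fun j => (v j).natDegree) (Finset.mem_univ j)

theorem vecDeg_eq_bot_iff {v : Fin m → F[X]} : vecDeg v = ⊥ ↔ v = 0 := by
  simp [vecDeg, Finset.sup_eq_bot_iff, funext_iff]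

theorem vecDegNat_eq_unbotD (v : Fin m → F[X]) : vecDegNat v = (vecDeg v).unbotD 0 := by
  rw [vecDeg, Finset.apply_sup_eq_sup_comp (WithBot.unbotD 0)
    (fun x y => by cases x <;> cases y <;> simp [← WithBot.coe_sup]) rfl]
  rfl

theorem vecDeg_eq_vecDegNat {v : Fin m → F[X]} (hv : v ≠ 0) : vecDeg v = vecDegNat v := by
  obtain ⟨d, hd⟩ := WithBot.ne_bot_iff_exists.mp (mt vecDeg_eq_bot_iff.mp hv)
  rw [vecDegNat_eq_unbotD, ← hd, WithBot.unbotD_coe]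
  rfl

theorem exists_degree_eq_vecDeg {v : Fin m → F[X]} (hv : v ≠ 0) :
    ∃ j, (v j).degree = vecDeg v := by
  have : Nonempty (Fin m) := by
    by_contra h
    exact hv (funext fun j => (h ⟨j⟩).elim)
  obtain ⟨j, -, hj⟩ := Finset.exists_mem_eq_sup Finset.univ Finset.univ_nonempty
    fun j => (v j).degree
  exact ⟨j, hj.symm⟩

theorem vecDeg_sub_of_vecDeg_lt {v w : Fin m → F[X]} (h : vecDeg v < vecDeg w) :
    vecDeg (v - w) = vecDeg w := by
  have hw : w ≠ 0 := fun hw => by simp [vecDeg_eq_bot_iff.mpr hw] at h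
  obtain ⟨j, hj⟩ := exists_degree_eq_vecDeg hw
  refine le_antisymm (Finset.sup_le fun i _ => ?_) ?_
  · exact (degree_sub_le _ _).trans
      (max_le ((degree_le_vecDeg v i).trans h.le) (degree_le_vecDeg w i))
  · have : (v j).degree < (w j).degree := hj ▸ (degree_le_vecDeg v j).trans_lt h
    rw [← hj, ← degree_sub_eq_right_of_degree_lt this]
    exact degree_le_vecDeg (v - w) j

theorem vecDeg_smul (p : F[X]) (v : Fin m → F[X]) : vecDeg (p • v) = p.degree + vecDeg v := by
  rw [vecDeg, vecDeg, Finset.apply_sup_eq_sup_comp (p.degree + ·)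
    (fun x y => (max_add_add_left _ _ _).symm) (WithBot.add_bot _)]
  simp [Function.comp_def, degree_mul]

theorem vecDeg_cons_zero (v : Fin m → F[X]) :
    vecDeg (Fin.cons 0 v : Fin (m + 1) → F[X]) = vecDeg v := by
  simp [vecDeg, Fin.univ_succ, Function.comp_def]

theorem vecDeg_snoc_zero (v : Fin m → F[X]) :
    vecDeg (Fin.snoc v 0 : Fin (m + 1) → F[X]) = vecDeg v := by
  simp [vecDeg, Fin.univ_castSuccEmb, Function.comp_def]

theorem vecDegNat_pi_single (j : Fin m) (p : F[X]) : vecDegNat (Pi.single j p) = p.natDegree := by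
  refine le_antisymm (Finset.sup_le fun i _ => ?_) ?_
  · rcases eq_or_ne i j with rfl | hij <;> simp [*]
  · simpa using natDegree_le_vecDegNat (Pi.single j p) j

theorem vecDeg_smul_cons_sub_smul_snoc {p q : F[X]} {u : Fin m → F[X]} (hu : u ≠ 0)
    (hpq : p.degree < q.degree) :
    vecDeg (p • (Fin.cons 0 u : Fin (m + 1) → F[X]) - q • Fin.snoc u 0) = q.degree + vecDeg u := by
  have hu' : vecDeg u ≠ ⊥ := mt vecDeg_eq_bot_iff.mp hu
  rw [vecDeg_sub_of_vecDeg_lt] <;> simp only [vecDeg_smul, vecDeg_cons_zero, vecDeg_snoc_zero]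
  exact WithBot.add_lt_add_right hu' hpq

end VecDeg

section Determinant

variable {R : Type*} [CommRing R] {n : Type*} [Fintype n] [DecidableEq n]

theorem coeff_prod_sum_of_natDegree_le {ι : Type*} (s : Finset ι) (f : ι → R[X]) (d : ι → ℕ)
    (h : ∀ i ∈ s, (f i).natDegree ≤ d i) :
    (∏ i ∈ s, f i).coeff (∑ i ∈ s, d i) = ∏ i ∈ s, (f i).coeff (d i) := by
  induction s using Finset.cons_induction with
  | empty => simp
  | cons a s ha ih =>
    have hs : ∀ i ∈ s, (f i).natDegree ≤ d i := fun i hi => h i (Finset.mem_cons_of_mem hi)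
    rw [Finset.prod_cons, Finset.sum_cons, Finset.prod_cons,
      coeff_mul_add_eq_of_natDegree_le (h a (Finset.mem_cons_self a s))
        ((natDegree_prod_le s f).trans (Finset.sum_le_sum hs)), ih hs]

theorem natDegree_det_le_sum (V : Matrix n n R[X]) (d : n → ℕ)
    (hV : ∀ i j, (V i j).natDegree ≤ d i) : V.det.natDegree ≤ ∑ i, d i := by
  rw [Matrix.det_apply]
  refine natDegree_sum_le_of_forall_le _ _ fun σ _ => ?_
  rw [Units.smul_def]
  refine (natDegree_smul_le _ _).trans ((natDegree_prod_le _ _).trans ?_)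
  rw [← Equiv.sum_comp σ d]
  exact Finset.sum_le_sum fun i _ => hV (σ i) i

theorem coeff_det_sum_eq_det_coeff (V : Matrix n n R[X]) (d : n → ℕ)
    (hV : ∀ i j, (V i j).natDegree ≤ d i) :
    V.det.coeff (∑ i, d i) = (Matrix.of fun i j => (V i j).coeff (d i)).det := by
  simp only [Matrix.det_apply, finsetSum_coeff, Matrix.of_apply]
  refine Finset.sum_congr rfl fun σ _ => ?_
  rw [Units.smul_def, Units.smul_def, coeff_smul, ← Equiv.sum_comp σ d,
    coeff_prod_sum_of_natDegree_le _ _ _ fun i _ => hV (σ i) i]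

end Determinant

section WeakPopov

variable {F : Type*} [Field F] {m : ℕ}

theorem coeff_vecDegNat_ne_zero_iff {v : Fin m → F[X]} (hv : v ≠ 0) (j : Fin m) :
    (v j).coeff (vecDegNat v) ≠ 0 ↔ (v j).degree = vecDeg v := by
  rw [vecDeg_eq_vecDegNat hv]
  refine ⟨degree_eq_of_le_of_coeff_ne_zero ?_, coeff_ne_zero_of_eq_degree⟩
  exact vecDeg_eq_vecDegNat hv ▸ degree_le_vecDeg v j

theorem le_leadPos {v : Fin m → F[X]} {j : Fin m} (h : (v j).degree = vecDeg v) :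
    (j : ℕ) ≤ leadPos v :=
  Finset.le_sup (f := fun j : Fin m => (j : ℕ)) (by simp [h])

theorem exists_val_eq_leadPos {v : Fin m → F[X]} (hv : v ≠ 0) :
    ∃ j : Fin m, (j : ℕ) = leadPos v ∧ (v j).degree = vecDeg v := by
  obtain ⟨j, hj⟩ := exists_degree_eq_vecDeg hv
  obtain ⟨jp, hjp, hsup⟩ :=
    Finset.exists_mem_eq_sup (Finset.univ.filter fun j : Fin m => (v j).degree = vecDeg v)
      ⟨j, Finset.mem_filter.mpr ⟨Finset.mem_univ j, hj⟩⟩ fun j : Fin m => (j : ℕ)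
  exact ⟨jp, hsup.symm, (Finset.mem_filter.mp hjp).2⟩

noncomputable def leadingCoeffMatrix (V : Matrix (Fin m) (Fin m) F[X]) :
    Matrix (Fin m) (Fin m) F :=
  Matrix.of fun i j => (V i j).coeff (vecDegNat (V i))

theorem det_leadingCoeffMatrix_ne_zero {V : Matrix (Fin m) (Fin m) F[X]} (hV : ∀ i, V i ≠ 0)
    (hWP : WeakPopov V) : (leadingCoeffMatrix V).det ≠ 0 := by
  choose p hp hpdeg using fun i => exists_val_eq_leadPos (hV i)
  have hp_inj : Function.Injective p := fun i i' h =>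
    hWP (show leadPos (V i) = leadPos (V i') by rw [← hp i, ← hp i', h])
  set σ := Equiv.ofBijective p hp_inj.bijective_of_finite
  have hσ : ∀ c, (p (σ.symm c) : ℕ) = c := fun c => congrArg Fin.val (σ.apply_symm_apply c)
  -- Sorted by leading position, row `c` is nonzero at column `c` and vanishes to its right.
  have htri : ((leadingCoeffMatrix V).submatrix σ.symm id).IsLowerTriangular := by
    intro c j hcj
    by_contra h
    have := le_leadPos ((coeff_vecDegNat_ne_zero_iff (hV _) _).mp h)
    rw [← hp, hσ] at this
    exact absurd hcj (not_lt.mpr this)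
  have hdiag : ∀ c, (leadingCoeffMatrix V).submatrix σ.symm id c c ≠ 0 := by
    intro c
    have := (coeff_vecDegNat_ne_zero_iff (hV _) _).mpr (hpdeg (σ.symm c))
    rwa [show p (σ.symm c) = c from Fin.ext (hσ c)] at this
  have hdet := Matrix.det_permute σ.symm (leadingCoeffMatrix V)
  rw [Matrix.det_of_isLowerTriangular _ htri] at hdet
  intro h
  rw [h, mul_zero] at hdet
  exact Finset.prod_ne_zero_iff.mpr (fun c _ => hdiag c) hdet

theorem natDegree_det_of_weakPopov {V : Matrix (Fin m) (Fin m) F[X]} (hV : ∀ i, V i ≠ 0)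
    (hWP : WeakPopov V) : V.det.natDegree = matDegNat V := by
  have hle : ∀ i j, (V i j).natDegree ≤ vecDegNat (V i) := fun i => natDegree_le_vecDegNat (V i)
  refine le_antisymm (natDegree_det_le_sum V _ hle) (le_natDegree_of_ne_zero ?_)
  rw [matDegNat, coeff_det_sum_eq_det_coeff V _ hle]
  exact det_leadingCoeffMatrix_ne_zero hV hWP

end WeakPopov

section UnipotentShift

open Matrix

variable {F : Type*} [Field F]

noncomputable def unipotentShift (ℓ : ℕ) (R : F[X]) : Matrix (Fin (ℓ + 1)) (Fin (ℓ + 1)) F[X] :=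
  Matrix.of fun a b => if a = b then 1 else if (a : ℕ) = b + 1 then -R else 0

variable {ℓ : ℕ} (R : F[X])

theorem det_unipotentShift : (unipotentShift ℓ R).det = 1 := by
  rw [Matrix.det_of_isLowerTriangular]
  · simp [unipotentShift]
  · intro a b hab
    have hab : (a : ℕ) < b := hab
    simp [unipotentShift, Fin.ext_iff, hab.ne]
    omega

theorem vecMul_unipotentShift (v : Fin (ℓ + 1) → F[X]) (j : Fin (ℓ + 1)) :
    (v ᵥ* unipotentShift ℓ R) j = v j - R * (Fin.snoc v 0 : Fin (ℓ + 2) → F[X]) j.succ := by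
  have hsplit : ∀ a, v a * unipotentShift ℓ R a j =
      (if a = j then v a else 0) + (if (a : ℕ) = j + 1 then -(R * v a) else 0) := by
    intro a
    simp only [unipotentShift, of_apply]
    split_ifs with h1 h2 h2 <;> (try subst h1) <;> first | omega | ring
  rw [vecMul, dotProduct, Finset.sum_congr rfl fun a _ => hsplit a, Finset.sum_add_distrib,
    Finset.sum_ite_eq' Finset.univ j, if_pos (Finset.mem_univ j), sub_eq_add_neg]
  congr 1
  induction j using Fin.lastCases with
  | last =>
    refine (Finset.sum_eq_zero fun a _ => if_neg ?_).trans (by simp)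
    simp only [Fin.val_last]
    omega
  | cast j =>
    have hsucc : ∀ a : Fin (ℓ + 1), (a : ℕ) = j.castSucc + 1 ↔ a = j.succ := by
      simp [Fin.ext_iff]
    simp_rw [hsucc, Finset.sum_ite_eq', Finset.mem_univ, if_true, Fin.succ_castSucc,
      Fin.snoc_castSucc]

end UnipotentShift

section StepII

open Matrix

variable {F : Type*} [Field F] {ℓ : ℕ} (k s : ℕ) (B : Matrix (Fin (ℓ + 1)) (Fin (ℓ + 1)) F[X])
  (R G : F[X])

theorem stepIIMat_zero : stepIIMat ℓ s B R G 0 = Pi.single 0 (G ^ (s + 1)) := by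
  funext j
  simp only [stepIIMat, of_apply, Fin.val_zero, ↓reduceDIte]
  by_cases hj : j = 0
  · simp [hj]
  · rw [if_neg (Fin.val_ne_zero_iff.mpr hj), Pi.single_eq_of_ne hj]

theorem stepIIMat_succ (i : Fin (ℓ + 1)) :
    stepIIMat ℓ s B R G i.succ = Fin.cons 0 (B i) - R • Fin.snoc (B i) 0 := by
  funext j
  induction j using Fin.cases with
  | zero => simp [stepIIMat]
  | succ j =>
    induction j using Fin.lastCases with
    | last =>
      simp [stepIIMat]
      rfl
    | cast j =>
      have hsnoc : (Fin.snoc (B i) 0 : Fin (ℓ + 2) → F[X]) j.castSucc.succ = B i j.succ := by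
        rw [Fin.succ_castSucc, Fin.snoc_castSucc]
      simp [stepIIMat, hsnoc]
      rfl

theorem submatrix_stepIIMat :
    (stepIIMat ℓ s B R G).submatrix Fin.succ Fin.succ = B * unipotentShift ℓ R := by
  ext i j
  rw [submatrix_apply, stepIIMat_succ, mul_apply_eq_vecMul, vecMul_unipotentShift]
  simp

theorem det_stepIIMat : (stepIIMat ℓ s B R G).det = G ^ (s + 1) * B.det := by
  rw [det_succ_row_zero, Fin.sum_univ_succ, stepIIMat_zero]
  simp [submatrix_stepIIMat, det_unipotentShift]

theorem det_Wmat_succ :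
    (Wmat F k (ℓ + 1)).det = (Wmat F k ℓ).det * X ^ ((ℓ + 1) * (k - 1)) := by
  simp only [Wmat, det_diagonal, Fin.prod_univ_castSucc, Fin.val_castSucc, Fin.val_last]

theorem det_Wmat_ne_zero : (Wmat F k ℓ).det ≠ 0 := by
  rw [Wmat, det_diagonal]
  exact Finset.prod_ne_zero_iff.mpr fun _ _ => pow_ne_zero _ X_ne_zero

theorem cons_zero_vecMul_Wmat (b : Fin (ℓ + 1) → F[X]) :
    (Fin.cons 0 b : Fin (ℓ + 2) → F[X]) ᵥ* Wmat F k (ℓ + 1) =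
      (X ^ (k - 1) : F[X]) • (Fin.cons 0 (b ᵥ* Wmat F k ℓ) : Fin (ℓ + 2) → F[X]) := by
  funext j
  induction j using Fin.cases with
  | zero => simp [Wmat, vecMul_diagonal]
  | succ j =>
    simp [Wmat, vecMul_diagonal]
    ring

theorem snoc_zero_vecMul_Wmat (b : Fin (ℓ + 1) → F[X]) :
    (Fin.snoc b 0 : Fin (ℓ + 2) → F[X]) ᵥ* Wmat F k (ℓ + 1) = Fin.snoc (b ᵥ* Wmat F k ℓ) 0 := by
  funext j
  induction j using Fin.lastCases with
  | last => simp [Wmat, vecMul_diagonal]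
  | cast j => simp [Wmat, vecMul_diagonal]

theorem pi_single_zero_vecMul_Wmat (p : F[X]) : Pi.single 0 p ᵥ* Wmat F k ℓ = Pi.single 0 p := by
  funext j
  by_cases hj : j = 0 <;> simp [hj, Wmat, vecMul_diagonal]

theorem stepIIMat_mul_Wmat_zero :
    (stepIIMat ℓ s B R G * Wmat F k (ℓ + 1)) 0 = Pi.single 0 (G ^ (s + 1)) := by
  rw [mul_apply_eq_vecMul, stepIIMat_zero, pi_single_zero_vecMul_Wmat]

theorem stepIIMat_mul_Wmat_succ (i : Fin (ℓ + 1)) :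
    (stepIIMat ℓ s B R G * Wmat F k (ℓ + 1)) i.succ =
      X ^ (k - 1) • Fin.cons 0 ((B * Wmat F k ℓ) i) - R • Fin.snoc ((B * Wmat F k ℓ) i) 0 := by
  rw [mul_apply_eq_vecMul, stepIIMat_succ, sub_vecMul, smul_vecMul, cons_zero_vecMul_Wmat,
    snoc_zero_vecMul_Wmat, mul_apply_eq_vecMul]

theorem matDegNat_stepIIMat_mul_Wmat (hR : k - 1 < R.natDegree)
    (hB : ∀ i, (B * Wmat F k ℓ) i ≠ 0) :
    matDegNat (stepIIMat ℓ s B R G * Wmat F k (ℓ + 1)) =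
      (G ^ (s + 1)).natDegree + matDegNat (B * Wmat F k ℓ) + (ℓ + 1) * R.natDegree := by
  have hR0 : R ≠ 0 := by
    rintro rfl
    simp at hR
  have hdeg : (X ^ (k - 1) : F[X]).degree < R.degree := by
    rw [degree_X_pow, degree_eq_natDegree hR0]
    exact_mod_cast hR
  have hrow : ∀ i, vecDegNat ((stepIIMat ℓ s B R G * Wmat F k (ℓ + 1)) i.succ) =
      vecDegNat ((B * Wmat F k ℓ) i) + R.natDegree := by
    intro i
    rw [vecDegNat_eq_unbotD, stepIIMat_mul_Wmat_succ, vecDeg_smul_cons_sub_smul_snoc (hB i) hdeg,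
      degree_eq_natDegree hR0, vecDeg_eq_vecDegNat (hB i), ← Nat.cast_add, add_comm]
    rfl
  rw [matDegNat, Fin.sum_univ_succ, stepIIMat_mul_Wmat_zero, vecDegNat_pi_single]
  simp only [hrow, Finset.sum_add_distrib, Finset.sum_const, Finset.card_univ, Fintype.card_fin,
    smul_eq_mul]
  rw [matDegNat, add_assoc]

end StepII

theorem statement12_general {F : Type*} [Field F] {n k s ℓ : ℕ}
    (hk : 1 ≤ k)
    (R : Polynomial F) (hRn : R.natDegree < n) (hRk : k ≤ R.natDegree)
    (G : Polynomial F) (hG0 : G ≠ 0)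
    (B : Matrix (Fin (ℓ + 1)) (Fin (ℓ + 1)) (Polynomial F))
    (hB : B.det ≠ 0) (hWP : WeakPopov (B * Wmat F k ℓ)) :
    matDegNat (stepIIMat ℓ s B R G * Wmat F k (ℓ + 1)) =
        (stepIIMat ℓ s B R G * Wmat F k (ℓ + 1)).det.natDegree +
          (ℓ + 1) * (R.natDegree - k + 1) ∧
      (ℓ + 1) * (R.natDegree - k + 1) ≤ (ℓ + 1) * (n - k) := by
  have hBW : (B * Wmat F k ℓ).det ≠ 0 := by
    rw [Matrix.det_mul]
    exact mul_ne_zero hB (det_Wmat_ne_zero k)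
  have hrows : ∀ i, (B * Wmat F k ℓ) i ≠ 0 := fun i h =>
    hBW (Matrix.det_eq_zero_of_row_eq_zero i (congrFun h))
  have hdet : (stepIIMat ℓ s B R G * Wmat F k (ℓ + 1)).det =
      G ^ (s + 1) * (B * Wmat F k ℓ).det * X ^ ((ℓ + 1) * (k - 1)) := by
    rw [Matrix.det_mul, Matrix.det_mul, det_stepIIMat, det_Wmat_succ]
    ring
  rw [matDegNat_stepIIMat_mul_Wmat k s B R G (by omega) hrows, hdet,
    natDegree_mul (mul_ne_zero (pow_ne_zero _ hG0) hBW) (pow_ne_zero _ X_ne_zero),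
    natDegree_mul (pow_ne_zero _ hG0) hBW, natDegree_X_pow, natDegree_det_of_weakPopov hrows hWP]
  have hsplit : (ℓ + 1) * R.natDegree = (ℓ + 1) * (k - 1) + (ℓ + 1) * (R.natDegree - k + 1) := by
    rw [← mul_add]
    congr 1
    omega
  exact ⟨by omega, Nat.mul_le_mul_left _ (by omega)⟩

/-- If B is nonsingular with B·W_ℓ in weak Popov form and deg R ≥ k, then
the orthogonality defect of C^II·W_{ℓ+1} equals (ℓ+1)(deg R − k + 1), which is at most
(ℓ+1)(n−k). -/
theorem statement12 {F : Type*} [Field F] [Fintype F] {n k s ℓ : ℕ}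
    (hk : 1 ≤ k) (hkn : k ≤ n) (hs : 1 ≤ s) (hsℓ : s ≤ ℓ)
    (R : Polynomial F) (hRn : R.natDegree < n) (hRk : k ≤ R.natDegree)
    (G : Polynomial F) (hG : G.natDegree = n) (hG0 : G ≠ 0)
    (B : Matrix (Fin (ℓ + 1)) (Fin (ℓ + 1)) (Polynomial F))
    (hB : B.det ≠ 0) (hWP : WeakPopov (B * Wmat F k ℓ)) :
    matDegNat (stepIIMat ℓ s B R G * Wmat F k (ℓ + 1)) =
        (stepIIMat ℓ s B R G * Wmat F k (ℓ + 1)).det.natDegree +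
          (ℓ + 1) * (R.natDegree - k + 1) ∧
      (ℓ + 1) * (R.natDegree - k + 1) ≤ (ℓ + 1) * (n - k) :=
  statement12_general hk R hRn hRk G hG0 B hB hWP
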